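/- arXiv:math/0012248 — 3 statements merged into one kernel-verified Lean document; each statement's English description precedes it below -/
import Mathlib

section
/- Let ω be a d-exact differential form on a compact hyperkähler manifold M that is d_C-closed for every complex structure C compatible with the hyperkähler structure. Then there exists a form τ of degree deg(ω) − 4 with ω = d d_I d_J d_K τ; explicitly τ = d* d_I* d_J* d_K* G⁴ ω where G is the Green operator of Δ. -/
/-!
Since `ω` is exact and killed by `d`, `d_I`, `d_J`, `d_K`, Hodge theory gives `ω = d_C d_C^* G ω`
for `C = 1, I, J, K`, hence `ω = (d d^* G)(d_I d_I^* G)(d_J d_J^* G)(d_K d_K^* G) ω`. Now `G`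
commutes with everything, and `d_x^*` anticommutes with `d_y` whenever `x ⊥ y` because
`{d_y, d_x^*} = Re(ȳx) Δ`; moving the starred operators to the right costs six signs, so
`ω = d d_I d_J d_K (d^* d_I^* d_J^* d_K^* G⁴ ω)`. Each adjoint lowers the degree by one.
-/

/-- The quaternionic family of differentials `d_x = x⁰ d + x¹ d_I + x² d_J + x³ d_K`. -/
def dqOp {Ω : Type*} [AddCommGroup Ω] [Module ℝ Ω]
    (d dI dJ dK : Module.End ℝ Ω) (x : Quaternion ℝ) : Module.End ℝ Ω :=
  x.re • d + x.imI • dI + x.imJ • dJ + x.imK • dK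

theorem mul_mul_mul_mul_eq_of_anticommute {R : Type*} [Ring R] {a b c e a' b' c' e' g : R}
    (hab : a' * b = -(b * a')) (hac : a' * c = -(c * a')) (hae : a' * e = -(e * a'))
    (hbc : b' * c = -(c * b')) (hbe : b' * e = -(e * b')) (hce : c' * e = -(e * c'))
    (hgb : Commute g b) (hgc : Commute g c) (hge : Commute g e)
    (hgb' : Commute g b') (hgc' : Commute g c') (hge' : Commute g e') :
    a * a' * g * (b * b' * g) * (c * c' * g) * (e * e' * g) =
      a * b * c * e * (a' * b' * c' * e') * g ^ 4 := by
  have anti : ∀ {x y : R}, x * y = -(y * x) → ∀ z, x * (y * z) = -(y * (x * z)) := by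
    intro x y h z
    rw [← mul_assoc, h, neg_mul, mul_assoc]
  simp only [mul_assoc, anti hab, anti hac, anti hae, anti hbc, anti hbe, anti hce,
    hgb.left_comm, hgc.left_comm, hge.left_comm, hgb'.left_comm, hgc'.left_comm, hge'.left_comm,
    neg_mul, mul_neg, neg_neg, pow_succ, pow_zero, one_mul]

theorem Module.End.apply_mem_eigenspace_sub_one {R M : Type*} [CommRing R] [AddCommGroup M]
    [Module R M] {N s : Module.End R M} (hs : N * s - s * N = -s) {c : R} {v : M}
    (hv : v ∈ N.eigenspace c) : s v ∈ N.eigenspace (c - 1) := by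
  rw [Module.End.mem_eigenspace_iff] at hv ⊢
  have hsv := LinearMap.congr_fun hs v
  simp only [LinearMap.sub_apply, Module.End.mul_apply, LinearMap.neg_apply, hv, map_smul] at hsv
  rw [sub_smul, one_smul, sub_eq_iff_eq_add.mp hsv]
  abel

section dqOp

open scoped Quaternion

variable {Ω : Type*} [AddCommGroup Ω] [Module ℝ Ω] {d dI dJ dK : Module.End ℝ Ω}

@[simp] theorem dqOp_one : dqOp d dI dJ dK 1 = d := by simp [dqOp]
@[simp] theorem dqOp_i : dqOp d dI dJ dK ⟨0, 1, 0, 0⟩ = dI := by simp [dqOp]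
@[simp] theorem dqOp_j : dqOp d dI dJ dK ⟨0, 0, 1, 0⟩ = dJ := by simp [dqOp]
@[simp] theorem dqOp_k : dqOp d dI dJ dK ⟨0, 0, 0, 1⟩ = dK := by simp [dqOp]

theorem mul_self_eq_zero_of_dqOp_anticomm
    (hanti : ∀ x y : Quaternion ℝ,
      dqOp d dI dJ dK x * dqOp d dI dJ dK y + dqOp d dI dJ dK y * dqOp d dI dJ dK x = 0) :
    d * d = 0 := by
  have h : (2 : ℝ) • (d * d) = 0 := by simpa [two_smul] using hanti 1 1
  simpa using h

variable {dstar dIstar dJstar dKstar Δ : Module.End ℝ Ω}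

theorem dqOp_anticomm_of_re_star_mul_eq_zero
    (hadj : ∀ x y : Quaternion ℝ,
      dqOp d dI dJ dK x * dqOp dstar dIstar dJstar dKstar y
        + dqOp dstar dIstar dJstar dKstar y * dqOp d dI dJ dK x
        = (star x * y).re • Δ)
    {x y : Quaternion ℝ} (hxy : x.re * y.re + x.imI * y.imI + x.imJ * y.imJ + x.imK * y.imK = 0) :
    dqOp dstar dIstar dJstar dKstar y * dqOp d dI dJ dK x
      = -(dqOp d dI dJ dK x * dqOp dstar dIstar dJstar dKstar y) := by
  have hre : (star x * y).re = 0 := by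
    simp only [Quaternion.re_mul, Quaternion.re_star, Quaternion.imI_star, Quaternion.imJ_star,
      Quaternion.imK_star]
    linarith
  rw [eq_neg_iff_add_eq_zero, add_comm, hadj, hre, zero_smul]

theorem transgression_operator_identity
    (hadj : ∀ x y : Quaternion ℝ,
      dqOp d dI dJ dK x * dqOp dstar dIstar dJstar dKstar y
        + dqOp dstar dIstar dJstar dKstar y * dqOp d dI dJ dK x
        = (star x * y).re • Δ)
    {G : Module.End ℝ Ω}
    (hG : ∀ x : Quaternion ℝ,
      Commute G (dqOp d dI dJ dK x) ∧ Commute G (dqOp dstar dIstar dJstar dKstar x)) :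
    d * dstar * G * (dI * dIstar * G) * (dJ * dJstar * G) * (dK * dKstar * G)
      = d * dI * dJ * dK * (dstar * dIstar * dJstar * dKstar) * G ^ 4 := by
  have anti := fun x y ↦ dqOp_anticomm_of_re_star_mul_eq_zero hadj (x := x) (y := y)
  have hId : dstar * dI = -(dI * dstar) := by simpa using anti ⟨0, 1, 0, 0⟩ 1 (by simp)
  have hJd : dstar * dJ = -(dJ * dstar) := by simpa using anti ⟨0, 0, 1, 0⟩ 1 (by simp)
  have hKd : dstar * dK = -(dK * dstar) := by simpa using anti ⟨0, 0, 0, 1⟩ 1 (by simp)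
  have hJI : dIstar * dJ = -(dJ * dIstar) := by
    simpa using anti ⟨0, 0, 1, 0⟩ ⟨0, 1, 0, 0⟩ (by simp)
  have hKI : dIstar * dK = -(dK * dIstar) := by
    simpa using anti ⟨0, 0, 0, 1⟩ ⟨0, 1, 0, 0⟩ (by simp)
  have hKJ : dJstar * dK = -(dK * dJstar) := by
    simpa using anti ⟨0, 0, 0, 1⟩ ⟨0, 0, 1, 0⟩ (by simp)
  obtain ⟨hGI, hGIs⟩ : Commute G dI ∧ Commute G dIstar := by simpa using hG ⟨0, 1, 0, 0⟩
  obtain ⟨hGJ, hGJs⟩ : Commute G dJ ∧ Commute G dJstar := by simpa using hG ⟨0, 0, 1, 0⟩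
  obtain ⟨hGK, hGKs⟩ : Commute G dK ∧ Commute G dKstar := by simpa using hG ⟨0, 0, 0, 1⟩
  exact mul_mul_mul_mul_eq_of_anticommute hId hJd hKd hJI hKI hKJ hGI hGJ hGK hGIs hGJs hGKs

end dqOp

theorem hyperkahler_fourth_order_transgression_general
    {Ω : Type*} [AddCommGroup Ω] [Module ℝ Ω]
    (N d dI dJ dK dstar dIstar dJstar dKstar G Δ : Module.End ℝ Ω)
    -- grading
    (hNds : N * dstar - dstar * N = -dstar)
    (hNdIs : N * dIstar - dIstar * N = -dIstar)
    (hNdJs : N * dJstar - dJstar * N = -dJstar)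
    (hNdKs : N * dKstar - dKstar * N = -dKstar)
    (hNG : N * G = G * N)
    -- quaternionic relations
    (hanti : ∀ x y : Quaternion ℝ,
      dqOp d dI dJ dK x * dqOp d dI dJ dK y
        + dqOp d dI dJ dK y * dqOp d dI dJ dK x = 0)
    (hadj : ∀ x y : Quaternion ℝ,
      dqOp d dI dJ dK x * dqOp dstar dIstar dJstar dKstar y
        + dqOp dstar dIstar dJstar dKstar y * dqOp d dI dJ dK x
        = (star x * y).re • Δ)
    -- the Green operator commutes with all differentials and adjoints
    (hGcomm : ∀ x : Quaternion ℝ,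
      G * dqOp d dI dJ dK x = dqOp d dI dJ dK x * G ∧
      G * dqOp dstar dIstar dJstar dKstar x = dqOp dstar dIstar dJstar dKstar x * G)
    -- Hodge theory: an exact `d_C`-closed form is `d_C d_C* G` of itself
    (hHodge : ∀ η : Ω, (∃ α, η = d α) →
      (d η = 0 → η = d (dstar (G η))) ∧
      (dI η = 0 → η = dI (dIstar (G η))) ∧
      (dJ η = 0 → η = dJ (dJstar (G η))) ∧
      (dK η = 0 → η = dK (dKstar (G η))))
    (ω : Ω) (k : ℕ)
    (hdeg : N ω = (k : ℝ) • ω)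
    (hexact : ∃ α, ω = d α)
    (hclosed : ∀ a b c : ℝ, a ^ 2 + b ^ 2 + c ^ 2 = 1 →
      (a • dI + b • dJ + c • dK) ω = 0) :
    ∃ τ : Ω, N τ = ((k : ℝ) - 4) • τ ∧ ω = d (dI (dJ (dK τ))) ∧
      τ = dstar (dIstar (dJstar (dKstar (G (G (G (G ω))))))) := by
  have hdω : d ω = 0 := by
    obtain ⟨α, rfl⟩ := hexact
    exact LinearMap.congr_fun (mul_self_eq_zero_of_dqOp_anticomm hanti) α
  have hIω : dI ω = 0 := by simpa using hclosed 1 0 0 (by norm_num)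
  have hJω : dJ ω = 0 := by simpa using hclosed 0 1 0 (by norm_num)
  have hKω : dK ω = 0 := by simpa using hclosed 0 0 1 (by norm_num)
  obtain ⟨hd, hI, hJ, hK⟩ := hHodge ω hexact
  have hG4 : (G ^ 4) ω = G (G (G (G ω))) := by simp [pow_succ]
  have hdegG4 : (G ^ 4) ω ∈ N.eigenspace k :=
    Module.End.mapsTo_genEigenspace_of_comm (Commute.pow_right hNG 4) _ _
      (Module.End.mem_eigenspace_iff.mpr hdeg)
  refine ⟨_, ?_, ?_, rfl⟩
  · have hτ := Module.End.apply_mem_eigenspace_sub_one hNds <|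
      Module.End.apply_mem_eigenspace_sub_one hNdIs <|
      Module.End.apply_mem_eigenspace_sub_one hNdJs <|
      Module.End.apply_mem_eigenspace_sub_one hNdKs hdegG4
    rw [Module.End.mem_eigenspace_iff, hG4] at hτ
    rw [hτ]
    congr 1
    ring
  · calc ω = (d * dstar * G * (dI * dIstar * G) * (dJ * dJstar * G) * (dK * dKstar * G)) ω := by
          simp only [Module.End.mul_apply]
          rw [← hK hKω, ← hJ hJω, ← hI hIω, ← hd hdω]
      _ = d (dI (dJ (dK (dstar (dIstar (dJstar (dKstar (G (G (G (G ω))))))))))) := by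
          rw [transgression_operator_identity hadj hGcomm, Module.End.mul_apply, hG4]
          rfl

/-- Let `ω` be a `d`-exact form of degree `k` on a compact hyperkähler
manifold which is `d_C`-closed for every compatible complex structure
`C = aI + bJ + cK`, `a² + b² + c² = 1`.  Then there is a form `τ` of degree `k - 4`
with `ω = d d_I d_J d_K τ`; explicitly `τ = d* d_I* d_J* d_K* G⁴ ω`, where `G` is the
Green operator of `Δ = dd* + d*d`.  The compact hyperkähler geometry is encoded by:
the grading operator `N` (with `d`'s raising and adjoints lowering the degree, and
`[N, G] = 0`), the quaternionic relations `{d_x, d_y} = 0`,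
`{d_x, d_y*} = Re(x̄y) Δ`, the commutation of `G` with all the differentials and
their adjoints, and the Hodge-theoretic fact that an exact `d_C`-closed form `η`
satisfies `η = d_C d_C* G η`. -/
theorem hyperkahler_fourth_order_transgression
    {Ω : Type*} [AddCommGroup Ω] [Module ℝ Ω]
    (N d dI dJ dK dstar dIstar dJstar dKstar G Δ : Module.End ℝ Ω)
    (hΔ : Δ = d * dstar + dstar * d)
    -- grading
    (hNd : N * d - d * N = d) (hNdI : N * dI - dI * N = dI)
    (hNdJ : N * dJ - dJ * N = dJ) (hNdK : N * dK - dK * N = dK)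
    (hNds : N * dstar - dstar * N = -dstar)
    (hNdIs : N * dIstar - dIstar * N = -dIstar)
    (hNdJs : N * dJstar - dJstar * N = -dJstar)
    (hNdKs : N * dKstar - dKstar * N = -dKstar)
    (hNG : N * G = G * N)
    -- quaternionic relations
    (hanti : ∀ x y : Quaternion ℝ,
      dqOp d dI dJ dK x * dqOp d dI dJ dK y
        + dqOp d dI dJ dK y * dqOp d dI dJ dK x = 0)
    (hadj : ∀ x y : Quaternion ℝ,
      dqOp d dI dJ dK x * dqOp dstar dIstar dJstar dKstar y
        + dqOp dstar dIstar dJstar dKstar y * dqOp d dI dJ dK x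
        = (star x * y).re • Δ)
    -- the Green operator commutes with all differentials and adjoints
    (hGcomm : ∀ x : Quaternion ℝ,
      G * dqOp d dI dJ dK x = dqOp d dI dJ dK x * G ∧
      G * dqOp dstar dIstar dJstar dKstar x = dqOp dstar dIstar dJstar dKstar x * G)
    -- Hodge theory: an exact `d_C`-closed form is `d_C d_C* G` of itself
    (hHodge : ∀ η : Ω, (∃ α, η = d α) →
      (d η = 0 → η = d (dstar (G η))) ∧
      (dI η = 0 → η = dI (dIstar (G η))) ∧
      (dJ η = 0 → η = dJ (dJstar (G η))) ∧
      (dK η = 0 → η = dK (dKstar (G η))))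
    (ω : Ω) (k : ℕ) (hk : 4 ≤ k)
    (hdeg : N ω = (k : ℝ) • ω)
    (hexact : ∃ α, ω = d α)
    (hclosed : ∀ a b c : ℝ, a ^ 2 + b ^ 2 + c ^ 2 = 1 →
      (a • dI + b • dJ + c • dK) ω = 0) :
    ∃ τ : Ω, N τ = ((k : ℝ) - 4) • τ ∧ ω = d (dI (dJ (dK τ))) ∧
      τ = dstar (dIstar (dJstar (dKstar (G (G (G (G ω))))))) :=
  hyperkahler_fourth_order_transgression_general N d dI dJ dK dstar dIstar dJstar dKstar G Δ hNds
    hNdIs hNdJs hNdKs hNG hanti hadj hGcomm hHodge ω k hdeg hexact hclosed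
end

section
/- Let V be a self-adjoint ℍ-module of real dimension 4k with compatible complex structures I, J, K. In the Clifford algebra Cl(V)⊗ℂ, the elements h = (1/2i)c(ω_I), e = (1/4)(c(ω_J) − i c(ω_K)), f = −(1/4)(c(ω_J) + i c(ω_K)) satisfy the sl₂ relations [h,e] = 2e, [h,f] = −2f, [e,f] = h. -/
/-!
For a skew-adjoint `T`, the Clifford relations give `⁅c(ω_T), c(v)⁆ = 2 c(T v)`: the derivation
`ad c(ω_T)` acts on generators as `2 T`. Expanding `c(ω_B)` in an orthonormal basis and moving `T`
across the sum by skew-adjointness then gives `⁅c(ω_T), c(ω_B)⁆ = 2 c(ω_⁅T, B⁆)`. The quaternion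
relations give `⁅I, J⁆ = 2 K` cyclically, so `c(ω_I), c(ω_J), c(ω_K)` satisfy the `su(2)` relations
`⁅c(ω_I), c(ω_J)⁆ = 4 c(ω_K)` (cyclically), and `h, e, f` is the standard `sl₂`-triple of the
complexification of `su(2)`.
-/

open scoped RealInnerProductSpace

section Quaternion

variable {R : Type*} [Ring R] {i j k : R}

theorem mul_eq_of_mul_mul_eq_neg_one_right (hk : k * k = -1) (h : i * j * k = -1) :
    i * j = k := by
  calc i * j = -(i * j * (k * k)) := by rw [hk, mul_neg_one, neg_neg]
    _ = k := by rw [← mul_assoc, h, neg_one_mul, neg_neg]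

theorem mul_eq_of_mul_mul_eq_neg_one_left (hi : i * i = -1) (h : i * j * k = -1) :
    j * k = i := by
  calc j * k = -(i * i * (j * k)) := by rw [hi, neg_one_mul, neg_neg]
    _ = i := by rw [← mul_assoc, mul_assoc i i j, mul_assoc i (i * j) k, h, mul_neg_one, neg_neg]

theorem mul_mul_eq_neg_one_rotate (hi : i * i = -1) (h : i * j * k = -1) : j * k * i = -1 := by
  rw [mul_eq_of_mul_mul_eq_neg_one_left hi h, hi]

theorem lie_eq_two_mul_of_mul_mul_eq_neg_one (hi : i * i = -1) (hj : j * j = -1)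
    (hk : k * k = -1) (h : i * j * k = -1) : ⁅i, j⁆ = 2 * k := by
  have hji : j * i = -k := by
    rw [← mul_eq_of_mul_mul_eq_neg_one_left hi h, ← mul_assoc, hj, neg_one_mul]
  rw [Ring.lie_def, mul_eq_of_mul_mul_eq_neg_one_right hk h, hji, sub_neg_eq_add, two_mul]

end Quaternion

open Complex in
theorem sl2_relations_of_su2_relations {L : Type*} [LieRing L] [LieAlgebra ℂ L] {x y z h e f : L}
    (hxy : ⁅x, y⁆ = (4 : ℂ) • z) (hyz : ⁅y, z⁆ = (4 : ℂ) • x) (hzx : ⁅z, x⁆ = (4 : ℂ) • y)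
    (hh : h = (1 / (2 * I)) • x) (he : e = (1 / 4 : ℂ) • (y - I • z))
    (hf : f = -((1 / 4 : ℂ) • (y + I • z))) :
    ⁅h, e⁆ = (2 : ℂ) • e ∧ ⁅h, f⁆ = (-2 : ℂ) • f ∧ ⁅e, f⁆ = h := by
  have hI : (1 / (2 * I) : ℂ) = -I / 2 := by field_simp; simp
  have hxz : ⁅x, z⁆ = -((4 : ℂ) • y) := by rw [← lie_skew, hzx]
  have hzy : ⁅z, y⁆ = -((4 : ℂ) • x) := by rw [← lie_skew, hyz]
  subst hh he hf
  rw [hI]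
  simp only [lie_smul, smul_lie, lie_sub, sub_lie, lie_add, lie_neg, lie_self,
    hxy, hyz, hxz, hzy]
  refine ⟨?_, ?_, ?_⟩ <;> match_scalars <;> grind [I_sq]

section Clifford

attribute [local instance 100] LieRing.ofAssociativeRing

variable {V : Type*} [NormedAddCommGroup V] [InnerProductSpace ℝ V]
  {ι : Type*} [Fintype ι] (e : OrthonormalBasis ι ℝ V)

theorem inner_map_eq_neg_inner_map_of_mul_self_eq_neg_one {T : Module.End ℝ V}
    (hT : T * T = -1) (hiso : ∀ u v : V, ⟪T u, T v⟫ = ⟪u, v⟫) (u v : V) :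
    ⟪T u, v⟫ = -⟪u, T v⟫ := by
  have hTT : T (T v) = -v := by simpa using LinearMap.congr_fun hT v
  rw [← hiso u (T v), hTT, inner_neg_right, neg_neg]

theorem OrthonormalBasis.sum_inner_smul_map {M : Type*} [AddCommGroup M] [Module ℝ M]
    (f : V →ₗ[ℝ] M) (w : V) : ∑ i, ⟪e i, w⟫ • f (e i) = f w := by
  simp_rw [← map_smul, ← map_sum, e.sum_repr']

theorem OrthonormalBasis.sum_bilin_left_eq_neg_sum_bilin_right {M : Type*} [AddCommGroup M]
    [Module ℝ M] (β : V →ₗ[ℝ] V →ₗ[ℝ] M) {T : Module.End ℝ V}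
    (hT : ∀ u v : V, ⟪T u, v⟫ = -⟪u, T v⟫) :
    ∑ i, β (T (e i)) (e i) = -∑ i, β (e i) (T (e i)) := by
  have hleft : ∀ i, β (T (e i)) (e i) = ∑ j, ⟪e j, T (e i)⟫ • β (e j) (e i) := fun i =>
    (e.sum_inner_smul_map (β.flip (e i)) (T (e i))).symm
  have hright : ∀ j, β (e j) (T (e j)) = ∑ i, ⟪e i, T (e j)⟫ • β (e j) (e i) := fun j =>
    (e.sum_inner_smul_map (β (e j)) (T (e j))).symm
  simp_rw [hleft, hright, ← Finset.sum_neg_distrib]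
  rw [Finset.sum_comm]
  refine Finset.sum_congr rfl fun j _ => Finset.sum_congr rfl fun i _ => ?_
  rw [← neg_smul, real_inner_comm, hT, real_inner_comm]

variable {A : Type*} [Ring A] [Algebra ℝ A] (c : V →ₗ[ℝ] A)

/-- `c(ω_T)` for the 2-form `ω_T = ⟪T ·, ·⟫`. -/
noncomputable def quantizedForm : Module.End ℝ V →ₗ[ℝ] A where
  toFun T := (1 / 2 : ℝ) • ∑ i, c (e i) * c (T (e i))
  map_add' T B := by
    simp only [LinearMap.add_apply, map_add, mul_add, Finset.sum_add_distrib, smul_add]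
  map_smul' r T := by
    simp only [LinearMap.smul_apply, map_smul, mul_smul_comm, ← Finset.smul_sum, smul_comm r,
      RingHom.id_apply]

theorem quantizedForm_apply (T : Module.End ℝ V) :
    quantizedForm e c T = (1 / 2 : ℝ) • ∑ i, c (e i) * c (T (e i)) := rfl

variable (hcliff : ∀ u v : V, c u * c v + c v * c u = algebraMap ℝ A (-2 * ⟪u, v⟫))
include hcliff

theorem lie_clifford_mul_clifford (u w v : V) :
    ⁅c u * c w, c v⁆ = (-2 * ⟪w, v⟫) • c u + (2 * ⟪u, v⟫) • c w := by
  have hanti : ⁅c u * c w, c v⁆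
      = c u * (c w * c v + c v * c w) - (c u * c v + c v * c u) * c w := by
    rw [Ring.lie_def]; noncomm_ring
  rw [hanti, hcliff, hcliff, ← Algebra.commutes, ← Algebra.smul_def, ← Algebra.smul_def]
  module

variable {T : Module.End ℝ V} (hT : ∀ u v : V, ⟪T u, v⟫ = -⟪u, T v⟫)
include hT

theorem lie_quantizedForm_map (v : V) : ⁅quantizedForm e c T, c v⁆ = (2 : ℝ) • c (T v) := by
  have hterm : ∀ i, ⁅c (e i) * c (T (e i)), c v⁆
      = (2 : ℝ) • (⟪e i, T v⟫ • c (e i)) + (2 : ℝ) • (⟪e i, v⟫ • (c ∘ₗ T) (e i)) := by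
    intro i
    rw [lie_clifford_mul_clifford c hcliff, hT, smul_smul, smul_smul, LinearMap.comp_apply]
    ring_nf
  rw [quantizedForm_apply, smul_lie, sum_lie]
  simp only [hterm, Finset.sum_add_distrib, ← Finset.smul_sum, e.sum_inner_smul_map]
  rw [LinearMap.comp_apply]
  module

theorem lie_quantizedForm (B : Module.End ℝ V) :
    ⁅quantizedForm e c T, quantizedForm e c B⁆ = (2 : ℝ) • quantizedForm e c ⁅T, B⁆ := by
  have hleibniz : ∀ a b : A, ⁅quantizedForm e c T, a * b⁆
      = ⁅quantizedForm e c T, a⁆ * b + a * ⁅quantizedForm e c T, b⁆ := by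
    intro a b; simp only [Ring.lie_def]; noncomm_ring
  have hswap : ∑ i, c (T (e i)) * c (B (e i)) = -∑ i, c (e i) * c ((B * T) (e i)) :=
    e.sum_bilin_left_eq_neg_sum_bilin_right ((LinearMap.mul ℝ A).compl₁₂ c (c ∘ₗ B)) hT
  rw [quantizedForm_apply e c B, lie_smul, lie_sum]
  simp only [hleibniz, lie_quantizedForm_map e c hcliff hT, smul_mul_assoc, mul_smul_comm,
    Finset.sum_add_distrib, ← Finset.smul_sum, hswap]
  rw [Ring.lie_def, map_sub, quantizedForm_apply, quantizedForm_apply]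
  simp only [Module.End.mul_apply]
  module

end Clifford

/-- Let `V` be a self-adjoint ℍ-module of real dimension `4k` with
compatible complex structures `I, J, K` (quaternion relations, orthogonal for the
inner product).  In the complexified Clifford algebra (modeled by a ℂ-algebra `A`
with generating map `c` satisfying the Clifford relations), the quantized Kähler
forms `c(ω_C) = ½ Σᵢ c(eᵢ) c(C eᵢ)` yield elements
`h = (1/2i) c(ω_I)`, `e = ¼ (c(ω_J) - i c(ω_K))`, `f = -¼ (c(ω_J) + i c(ω_K))`
satisfying the sl₂ relations `[h,e] = 2e`, `[h,f] = -2f`, `[e,f] = h`. -/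
theorem clifford_sl2_triple
    {V : Type*} [NormedAddCommGroup V] [InnerProductSpace ℝ V]
    {A : Type*} [Ring A] [Algebra ℝ A] [Algebra ℂ A] [IsScalarTower ℝ ℂ A]
    (k : ℕ) (e : OrthonormalBasis (Fin (4 * k)) ℝ V)
    (c : V →ₗ[ℝ] A)
    (hcliff : ∀ u v : V, c u * c v + c v * c u
      = algebraMap ℝ A (-2 * (inner ℝ u v : ℝ)))
    (I J K : Module.End ℝ V)
    (hI2 : I * I = -1) (hJ2 : J * J = -1) (hK2 : K * K = -1)
    (hIJK : I * J * K = -1)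
    (hIiso : ∀ u v : V, (inner ℝ (I u) (I v) : ℝ) = inner ℝ u v)
    (hJiso : ∀ u v : V, (inner ℝ (J u) (J v) : ℝ) = inner ℝ u v)
    (hKiso : ∀ u v : V, (inner ℝ (K u) (K v) : ℝ) = inner ℝ u v)
    (cωI cωJ cωK hEl eEl fEl : A)
    (hcI : cωI = (1 / 2 : ℝ) • ∑ i : Fin (4 * k), c (e i) * c (I (e i)))
    (hcJ : cωJ = (1 / 2 : ℝ) • ∑ i : Fin (4 * k), c (e i) * c (J (e i)))
    (hcK : cωK = (1 / 2 : ℝ) • ∑ i : Fin (4 * k), c (e i) * c (K (e i)))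
    (hh : hEl = (1 / (2 * Complex.I)) • cωI)
    (he : eEl = (1 / 4 : ℂ) • (cωJ - Complex.I • cωK))
    (hf : fEl = -((1 / 4 : ℂ) • (cωJ + Complex.I • cωK))) :
    hEl * eEl - eEl * hEl = (2 : ℂ) • eEl ∧
    hEl * fEl - fEl * hEl = (-2 : ℂ) • fEl ∧
    eEl * fEl - fEl * eEl = hEl := by
  have hJKI : J * K * I = -1 := mul_mul_eq_neg_one_rotate hI2 hIJK
  have hKIJ : K * I * J = -1 := mul_mul_eq_neg_one_rotate hJ2 hJKI
  -- `c` is linear for the real structure restricted from `ℂ`, whereas `hcliff` and `hcI` use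
  -- `‹Algebra ℝ A›`; by `IsScalarTower` the two coincide.
  obtain rfl : ‹Algebra ℝ A› = Algebra.complexToReal :=
    Algebra.algebra_ext _ _ fun r => IsScalarTower.algebraMap_apply ℝ ℂ A r
  have hsu2 : ∀ {T B C : Module.End ℝ V}, (∀ u v : V, ⟪T u, T v⟫ = ⟪u, v⟫) →
      T * T = -1 → B * B = -1 → C * C = -1 → T * B * C = -1 →
      ⁅quantizedForm e c T, quantizedForm e c B⁆ = (4 : ℂ) • quantizedForm e c C := by
    intro T B C hTiso hT2 hB2 hC2 hTBC
    rw [lie_quantizedForm e c hcliff (inner_map_eq_neg_inner_map_of_mul_self_eq_neg_one hT2 hTiso),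
      lie_eq_two_mul_of_mul_mul_eq_neg_one hT2 hB2 hC2 hTBC, two_mul, map_add, ← two_smul ℝ,
      smul_smul, ← algebraMap_smul ℂ]
    norm_num
  rw [← quantizedForm_apply] at hcI hcJ hcK
  subst hcI hcJ hcK
  let _ : LieRing A := LieRing.ofAssociativeRing
  simp only [← Ring.lie_def]
  exact sl2_relations_of_su2_relations (hsu2 hIiso hI2 hJ2 hK2 hIJK) (hsu2 hJiso hJ2 hK2 hI2 hJKI)
    (hsu2 hKiso hK2 hI2 hJ2 hKIJ) hh he hf
end

section
/- Let G: (0,∞) → ℝ be a smooth function, regular at t = 0, with rapid decay of G and its derivatives at infinity. Set H(t) = t∂_t(t∂_t + 1)G(t) and ζ_H(s) = (1/Γ(s)) ∫₀^∞ H(t) t^{s−1} dt (defined by analytic continuation). Then ζ_H′(0) = −G(0), i.e. the regularized integral ∫_{→0}^∞ t∂_t(t∂_t+1)G(t) dt/t equals −G(0). -/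
open MeasureTheory Filter

open Set Asymptotics

-- helper: derivative of t ↦ (t:ℂ)^c at t > 0
lemma hasDerivAt_cpow_ofReal {x : ℝ} (hx : 0 < x) (c : ℂ) :
    HasDerivAt (fun y : ℝ => (y : ℂ) ^ c) (c * (x : ℂ) ^ (c - 1)) x := by
  have h := (hasDerivAt_id (x : ℂ)).cpow_const (c := c)
    (show (x:ℂ) ∈ Complex.slitPlane from Or.inl (by simpa using hx))
  simpa using h.comp_ofReal

-- rapid decay ⇒ big-O of any negative rpow at infinity (complex-cast version)
lemma decay_isBigO_rpow {f : ℝ → ℝ}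
    (hdec : ∀ p : ℕ, (fun t : ℝ => t ^ p * f t) =O[atTop] (fun _ : ℝ => (1 : ℝ)))
    (a : ℝ) : (fun t : ℝ => ((f t : ℝ) : ℂ)) =O[atTop] (fun t : ℝ => t ^ (-a)) := by
  obtain ⟨p, hp⟩ := exists_nat_ge a
  have h1 : (fun t : ℝ => t ^ (-(p : ℝ)) * (t ^ p * f t)) =O[atTop]
      (fun t : ℝ => t ^ (-(p : ℝ)) * 1) := (isBigO_refl _ _).mul (hdec p)
  have h2 : (fun t : ℝ => f t) =O[atTop] (fun t : ℝ => t ^ (-(p : ℝ))) := by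
    refine (h1.congr' ?_ ?_)
    · filter_upwards [eventually_gt_atTop (0:ℝ)] with t ht
      rw [Real.rpow_neg ht.le, Real.rpow_natCast]
      field_simp
    · filter_upwards with t using mul_one _
  have h3 : (fun t : ℝ => t ^ (-(p:ℝ))) =O[atTop] (fun t : ℝ => t ^ (-a)) := by
    refine IsBigO.of_bound 1 ?_
    filter_upwards [eventually_ge_atTop (1:ℝ)] with t ht
    have h0 : (0:ℝ) < t := lt_of_lt_of_le one_pos ht
    rw [one_mul, Real.norm_eq_abs, Real.norm_eq_abs, abs_of_pos (Real.rpow_pos_of_pos h0 _),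
      abs_of_pos (Real.rpow_pos_of_pos h0 _)]
    exact Real.rpow_le_rpow_of_exponent_le ht (by linarith)
  have h4 : (fun t : ℝ => ((f t : ℝ) : ℂ)) =O[atTop] (fun t : ℝ => f t) := by
    refine IsBigO.of_bound 1 ?_
    filter_upwards with t
    simp [Complex.norm_real]
  exact h4.trans (h2.trans h3)

-- limit of t^c * f(t) at +∞ for rapidly decaying f
lemma tendsto_cpow_mul_atTop {f : ℝ → ℝ}
    (hdec : ∀ p : ℕ, (fun t : ℝ => t ^ p * f t) =O[atTop] (fun _ : ℝ => (1 : ℝ)))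
    (c : ℂ) : Tendsto (fun t : ℝ => (t : ℂ) ^ c * f t) atTop (nhds 0) := by
  have h1 : (fun t : ℝ => (t : ℂ) ^ c) =O[atTop] (fun t : ℝ => t ^ c.re) := by
    refine IsBigO.of_bound 1 ?_
    filter_upwards [eventually_gt_atTop (0:ℝ)] with t ht
    rw [one_mul, Complex.norm_cpow_eq_rpow_re_of_pos ht,
      Real.norm_eq_abs, abs_of_pos (Real.rpow_pos_of_pos ht _)]
  have h2 := h1.mul (decay_isBigO_rpow hdec (c.re + 1))
  have heq : (fun t : ℝ => t ^ c.re * t ^ (-(c.re + 1))) =ᶠ[atTop]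
      (fun t : ℝ => t ^ (-(1:ℝ))) := by
    filter_upwards [eventually_gt_atTop (0:ℝ)] with t ht
    rw [← Real.rpow_add ht]
    ring_nf
  have h3 : (fun t : ℝ => (t:ℂ) ^ c * f t) =O[atTop] (fun t : ℝ => t ^ (-(1:ℝ))) :=
    h2.trans_eventuallyEq heq
  exact h3.trans_tendsto (tendsto_rpow_neg_atTop one_pos)

-- limit of t^c * f(t) at 0⁺ for continuous f, re c > 0
lemma tendsto_cpow_mul_zero {f : ℝ → ℝ} (hf : Continuous f) {c : ℂ} (hc : 0 < c.re) :
    Tendsto (fun t : ℝ => (t : ℂ) ^ c * f t) (nhdsWithin 0 (Ioi 0)) (nhds 0) := by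
  have h1 : Tendsto (fun t : ℝ => (t : ℂ) ^ c) (nhdsWithin 0 (Ioi 0)) (nhds 0) := by
    rw [tendsto_zero_iff_norm_tendsto_zero]
    have heq : (fun t : ℝ => ‖(t:ℂ) ^ c‖) =ᶠ[nhdsWithin 0 (Ioi 0)] (fun t : ℝ => t ^ c.re) := by
      filter_upwards [self_mem_nhdsWithin] with t (ht : 0 < t)
      rw [Complex.norm_cpow_eq_rpow_re_of_pos ht]
    rw [tendsto_congr' heq]
    have := (Real.continuousAt_rpow_const 0 c.re (Or.inr hc.le)).continuousWithinAt (s := Ioi 0)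
    simpa [Real.zero_rpow hc.ne'] using this.tendsto
  have h2 : Tendsto (fun t : ℝ => ((f t : ℝ):ℂ)) (nhdsWithin 0 (Ioi 0)) (nhds (f 0)) := by
    exact (Complex.continuous_ofReal.comp hf).continuousAt.continuousWithinAt.tendsto
  exact h1.zero_mul_isBoundedUnder_le h2.norm.isBoundedUnder_le

-- integrability of t^(s-1) * f(t) on (0,∞)
lemma integrableOn_cpow_mul {f : ℝ → ℝ} (hf : Continuous f)
    (hdec : ∀ p : ℕ, (fun t : ℝ => t ^ p * f t) =O[atTop] (fun _ : ℝ => (1 : ℝ)))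
    {s : ℂ} (hs : 0 < s.re) :
    IntegrableOn (fun t : ℝ => (t : ℂ) ^ (s - 1) * f t) (Ioi 0) := by
  have hbot : (fun t : ℝ => ((f t : ℝ):ℂ)) =O[nhdsWithin 0 (Ioi 0)] (fun t : ℝ => t ^ (-(0:ℝ))) := by
    have : Tendsto (fun t : ℝ => ((f t : ℝ):ℂ)) (nhdsWithin 0 (Ioi 0)) (nhds (f 0)) :=
      (Complex.continuous_ofReal.comp hf).continuousAt.continuousWithinAt.tendsto
    simpa using this.isBigO_one ℝ
  have h := mellinConvergent_of_isBigO_rpow (f := fun t : ℝ => ((f t : ℝ):ℂ))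
    (a := s.re + 1) (b := 0)
    ((Complex.continuous_ofReal.comp hf).locallyIntegrable.locallyIntegrableOn _)
    (decay_isBigO_rpow hdec (s.re + 1)) (by linarith) hbot hs
  simpa [MellinConvergent, smul_eq_mul, mul_comm] using h

lemma ibp_main (G : ℝ → ℝ) (hG : ContDiff ℝ (⊤ : ℕ∞) G)
    (hdecay : ∀ p m : ℕ,
      (fun t : ℝ => t ^ p * iteratedDeriv m G t) =O[atTop] (fun _ : ℝ => (1 : ℝ)))
    {s : ℂ} (hs : 1 < s.re) :
    ∫ t in Ioi (0:ℝ), ((t ^ 2 * deriv (deriv G) t + 2 * t * deriv G t : ℝ) : ℂ) * (t : ℂ) ^ (s - 1)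
      = (s - 1) * s * ∫ t in Ioi (0:ℝ), (t : ℂ) ^ (s - 1) * G t := by
  have hs0 : 0 < s.re := by linarith
  set g1 := deriv G with hg1
  set g2 := deriv g1 with hg2
  have hGi : ContDiff ℝ (⊤:ℕ∞) G := hG.of_le (by simp)
  have hG' : ContDiff ℝ (⊤:ℕ∞) g1 := (contDiff_infty_iff_deriv.mp hGi).2
  have hg1c : Continuous g1 := hGi.continuous_deriv (by norm_num)
  have hg2c : Continuous g2 := hG'.continuous_deriv (by norm_num)
  have hGd : ∀ t : ℝ, HasDerivAt G (g1 t) t :=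
    fun t => ((hG.differentiable (by simp)).differentiableAt).hasDerivAt
  have hg1d : ∀ t : ℝ, HasDerivAt g1 (g2 t) t :=
    fun t => ((hG'.differentiable (by norm_num)).differentiableAt).hasDerivAt
  have hdec0 : ∀ p : ℕ, (fun t : ℝ => t ^ p * G t) =O[atTop] (fun _ : ℝ => (1:ℝ)) := by
    intro p; simpa [iteratedDeriv_zero] using hdecay p 0
  have hdec1 : ∀ p : ℕ, (fun t : ℝ => t ^ p * g1 t) =O[atTop] (fun _ : ℝ => (1:ℝ)) := by
    intro p; simpa [iteratedDeriv_one] using hdecay p 1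
  have hdec2 : ∀ p : ℕ, (fun t : ℝ => t ^ p * g2 t) =O[atTop] (fun _ : ℝ => (1:ℝ)) := by
    intro p
    have h2 : iteratedDeriv 2 G = g2 := by
      rw [show (2:ℕ) = 1 + 1 from rfl, iteratedDeriv_succ, iteratedDeriv_one]
    simpa [h2] using hdecay p 2
  have hdecA : ∀ p : ℕ, (fun t : ℝ => t ^ p * (t * g1 t)) =O[atTop] (fun _ : ℝ => (1:ℝ)) := by
    intro p
    exact (hdec1 (p+1)).congr_left (fun t => by ring)
  have hdecH : ∀ p : ℕ, (fun t : ℝ => t ^ p * (t^2 * g2 t + 2 * t * g1 t)) =O[atTop]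
      (fun _ : ℝ => (1:ℝ)) := by
    intro p
    exact ((hdec2 (p+2)).add ((hdec1 (p+1)).const_mul_left 2)).congr_left (fun t => by ring)
  have hAc : Continuous (fun t : ℝ => t * g1 t) := continuous_id.mul hg1c
  have hHc : Continuous (fun t : ℝ => t^2 * g2 t + 2 * t * g1 t) := by continuity
  have hpow1 : ∀ t : ℝ, 0 < t → ((t:ℂ))^(s-1-1) * ((t:ℂ))^2 = (t:ℂ)^s := by
    intro t ht
    have ht0 : (t:ℂ) ≠ 0 := Complex.ofReal_ne_zero.mpr (ne_of_gt ht)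
    rw [show ((t:ℂ))^(2:ℕ) = (t:ℂ)^((2:ℕ):ℂ) from (Complex.cpow_natCast _ 2).symm,
      ← Complex.cpow_add _ _ ht0]
    congr 1
    ring
  have hpow2 : ∀ t : ℝ, 0 < t → ((t:ℂ))^(s-1) * ((t:ℂ))^2 = (t:ℂ)^(s+1) := by
    intro t ht
    have ht0 : (t:ℂ) ≠ 0 := Complex.ofReal_ne_zero.mpr (ne_of_gt ht)
    rw [show ((t:ℂ))^(2:ℕ) = (t:ℂ)^((2:ℕ):ℂ) from (Complex.cpow_natCast _ 2).symm,
      ← Complex.cpow_add _ _ ht0]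
    congr 1
    ring
  set I0 := ∫ t in Ioi (0:ℝ), (t : ℂ) ^ (s - 1) * G t with hI0
  set I1 := ∫ t in Ioi (0:ℝ), (t : ℂ) ^ s * g1 t with hI1
  -- second integration by parts: I1 = -s * I0
  have key2 : I1 = -(s * I0) := by
    have h := integral_Ioi_mul_deriv_eq_deriv_mul (a := 0)
      (u := fun t : ℝ => (t:ℂ) ^ s) (u' := fun t : ℝ => s * (t:ℂ) ^ (s-1))
      (v := fun t : ℝ => ((G t : ℝ) : ℂ)) (v' := fun t : ℝ => ((g1 t : ℝ) : ℂ))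
      (a' := 0) (b' := 0)
      (fun x hx => hasDerivAt_cpow_ofReal hx s)
      (fun x _ => (hGd x).ofReal_comp)
      ?_ ?_ ?_ ?_
    · have hmul : (∫ t in Ioi (0:ℝ), (s * (t:ℂ) ^ (s-1)) * ((G t : ℝ) : ℂ))
          = s * I0 := by
        rw [hI0, ← MeasureTheory.integral_const_mul]
        exact setIntegral_congr_fun measurableSet_Ioi (fun t _ => by ring)
      calc I1 = 0 - 0 - ∫ t in Ioi (0:ℝ), (s * (t:ℂ) ^ (s-1)) * ((G t : ℝ) : ℂ) := h
        _ = -(s * I0) := by rw [hmul]; ring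
    · -- IntegrableOn (u * v')
      have hbase := integrableOn_cpow_mul hg1c hdec1 (s := s + 1) (by simp; linarith)
      refine MeasureTheory.IntegrableOn.congr_fun hbase (fun t _ => ?_) measurableSet_Ioi
      simp only [Pi.mul_apply, add_sub_cancel_right]
    · -- IntegrableOn (u' * v)
      have hbase := (integrableOn_cpow_mul hG.continuous hdec0 hs0).const_mul s
      refine MeasureTheory.IntegrableOn.congr_fun hbase (fun t _ => ?_) measurableSet_Ioi
      simp only [Pi.mul_apply]; ring
    · exact (tendsto_cpow_mul_zero hG.continuous hs0).congr (fun t => rfl)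
    · exact (tendsto_cpow_mul_atTop hdec0 s).congr (fun t => rfl)
  -- first integration by parts
  have key1 : (∫ t in Ioi (0:ℝ),
      ((t ^ 2 * deriv (deriv G) t + 2 * t * deriv G t : ℝ) : ℂ) * (t : ℂ) ^ (s - 1))
      = -((s - 1) * I1) := by
    have h := integral_Ioi_mul_deriv_eq_deriv_mul (a := 0)
      (u := fun t : ℝ => (t:ℂ) ^ (s-1)) (u' := fun t : ℝ => (s-1) * (t:ℂ) ^ (s-1-1))
      (v := fun t : ℝ => (t:ℂ)^2 * ((g1 t : ℝ) : ℂ))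
      (v' := fun t : ℝ => 2*(t:ℂ) * ((g1 t : ℝ):ℂ) + (t:ℂ)^2 * ((g2 t : ℝ):ℂ))
      (a' := 0) (b' := 0)
      (fun x hx => hasDerivAt_cpow_ofReal hx (s-1))
      (fun x _ => ?_) ?_ ?_ ?_ ?_
    · have hmul : (∫ t in Ioi (0:ℝ), ((s-1) * (t:ℂ)^(s-1-1)) * ((t:ℂ)^2 * ((g1 t:ℝ):ℂ)))
          = (s-1) * I1 := by
        rw [hI1, ← MeasureTheory.integral_const_mul]
        refine setIntegral_congr_fun measurableSet_Ioi (fun t ht => ?_)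
        rw [show ((s-1) * (t:ℂ)^(s-1-1)) * ((t:ℂ)^2 * ((g1 t:ℝ):ℂ))
            = (s-1) * (((t:ℂ)^(s-1-1) * (t:ℂ)^2) * ((g1 t:ℝ):ℂ)) by ring, hpow1 t ht]
      calc (∫ t in Ioi (0:ℝ),
            ((t ^ 2 * deriv (deriv G) t + 2 * t * deriv G t : ℝ) : ℂ) * (t : ℂ) ^ (s - 1))
          = ∫ t in Ioi (0:ℝ),
            (t:ℂ)^(s-1) * (2*(t:ℂ) * ((g1 t : ℝ):ℂ) + (t:ℂ)^2 * ((g2 t : ℝ):ℂ)) := by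
            refine setIntegral_congr_fun measurableSet_Ioi (fun t _ => ?_)
            push_cast
            ring
        _ = 0 - 0 - ∫ t in Ioi (0:ℝ), ((s-1) * (t:ℂ)^(s-1-1)) * ((t:ℂ)^2 * ((g1 t:ℝ):ℂ)) := h
        _ = -((s-1) * I1) := by rw [hmul]; ring
    · -- HasDerivAt v
      have hv1 : HasDerivAt (fun t : ℝ => (t:ℂ)^2) (2*(x:ℂ)) x := by
        simpa using (hasDerivAt_pow 2 x).ofReal_comp
      exact hv1.mul (hg1d x).ofReal_comp
    · -- IntegrableOn (u * v')
      have hbase := integrableOn_cpow_mul hHc hdecH hs0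
      refine MeasureTheory.IntegrableOn.congr_fun hbase (fun t _ => ?_) measurableSet_Ioi
      simp only [Pi.mul_apply]
      push_cast
      ring
    · -- IntegrableOn (u' * v)
      have hbase := (integrableOn_cpow_mul hAc hdecA hs0).const_mul (s-1)
      refine MeasureTheory.IntegrableOn.congr_fun hbase (fun t ht => ?_) measurableSet_Ioi
      simp only [Pi.mul_apply]
      rw [show ((s-1) * ((t:ℂ)^(s-1) * ((t * g1 t : ℝ):ℂ)))
          = (s-1) * (((t:ℂ)^(s-1) * (t:ℂ)) * ((g1 t:ℝ):ℂ)) by push_cast; ring]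
      rw [show ((s-1) * (t:ℂ)^(s-1-1)) * ((t:ℂ)^2 * ((g1 t:ℝ):ℂ))
          = (s-1) * (((t:ℂ)^(s-1-1) * (t:ℂ)^2) * ((g1 t:ℝ):ℂ)) by ring, hpow1 t ht]
      rw [show (t:ℂ)^(s-1) * (t:ℂ) = (t:ℂ)^(s-1) * (t:ℂ)^(1:ℕ) by norm_num,
        show ((t:ℂ))^(1:ℕ) = (t:ℂ)^((1:ℕ):ℂ) from (Complex.cpow_natCast _ 1).symm,
        ← Complex.cpow_add _ _ (Complex.ofReal_ne_zero.mpr (ne_of_gt ht))]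
      congr 2
      ring
    · -- limit at 0
      refine (tendsto_cpow_mul_zero hg1c (show 0 < (s+1).re by simp; linarith)).congr' ?_
      filter_upwards [self_mem_nhdsWithin] with t (ht : 0 < t)
      show (t:ℂ) ^ (s+1) * ((g1 t : ℝ):ℂ) = (t:ℂ)^(s-1) * ((t:ℂ)^2 * ((g1 t:ℝ):ℂ))
      rw [← hpow2 t ht]
      push_cast
      ring
    · -- limit at ∞
      refine (tendsto_cpow_mul_atTop hdec1 (s+1)).congr' ?_
      filter_upwards [eventually_gt_atTop (0:ℝ)] with t ht
      show (t:ℂ) ^ (s+1) * ((g1 t : ℝ):ℂ) = (t:ℂ)^(s-1) * ((t:ℂ)^2 * ((g1 t:ℝ):ℂ))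
      rw [← hpow2 t ht]
      push_cast
      ring
  rw [key1, key2]
  ring

/-- modified function whose Mellin transform is entire on re s > -1 -/
noncomputable def auxF (G : ℝ → ℝ) : ℝ → ℂ := fun t =>
  (G t : ℂ) - Set.indicator (Set.Ioc 0 1) (fun _ => (G 0 : ℂ)) t

lemma auxF_differentiable (G : ℝ → ℝ) (hG : ContDiff ℝ (⊤ : ℕ∞) G)
    (hdecay : ∀ p m : ℕ,
      (fun t : ℝ => t ^ p * iteratedDeriv m G t) =O[atTop] (fun _ : ℝ => (1 : ℝ)))
    {s : ℂ} (hs : -1 < s.re) : DifferentiableAt ℂ (mellin (auxF G)) s := by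
  have hdec0 : ∀ p : ℕ, (fun t : ℝ => t ^ p * G t) =O[atTop] (fun _ : ℝ => (1:ℝ)) := by
    intro p; simpa [iteratedDeriv_zero] using hdecay p 0
  have hloc : LocallyIntegrableOn (auxF G) (Ioi 0) := by
    have h1 : LocallyIntegrableOn (fun t : ℝ => ((G t : ℝ):ℂ)) (Ioi 0) :=
      (Complex.continuous_ofReal.comp hG.continuous).locallyIntegrable.locallyIntegrableOn _
    have h2 : Integrable (Set.indicator (Set.Ioc 0 1) (fun _ : ℝ => (G 0 : ℂ))) := by
      rw [integrable_indicator_iff measurableSet_Ioc]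
      exact integrableOn_const (by simp)
    exact h1.sub (h2.locallyIntegrable.locallyIntegrableOn _)
  have htop : (auxF G) =O[atTop] (fun t : ℝ => t ^ (-(s.re + 1))) := by
    refine (decay_isBigO_rpow hdec0 (s.re + 1)).congr' ?_ EventuallyEq.rfl
    filter_upwards [eventually_gt_atTop (1:ℝ)] with t ht
    rw [auxF, Set.indicator_of_notMem (fun hc => absurd hc.2 (not_le.mpr ht)), sub_zero]
  have hbot : (auxF G) =O[nhdsWithin 0 (Ioi 0)] (fun t : ℝ => t ^ (-(-1):ℝ)) := by
    have hd : DifferentiableAt ℝ (fun t : ℝ => ((G t : ℝ):ℂ)) 0 :=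
      (((hG.differentiable (by simp)).differentiableAt).hasDerivAt.ofReal_comp).differentiableAt
    have h1 : (fun t : ℝ => ((G t : ℝ):ℂ) - ((G 0:ℝ):ℂ)) =O[nhds 0] (fun t : ℝ => t - 0) :=
      hd.isBigO_sub
    refine ((h1.mono nhdsWithin_le_nhds).congr' ?_ ?_)
    · filter_upwards [Ioc_mem_nhdsGT_of_mem ⟨le_refl (0:ℝ), zero_lt_one⟩] with t ht
      rw [auxF, Set.indicator_of_mem ht]
    · filter_upwards [self_mem_nhdsWithin] with t (ht : 0 < t)
      rw [sub_zero, neg_neg, Real.rpow_one]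
  exact mellin_differentiableAt_of_isBigO_rpow hloc htop (by linarith) hbot (by norm_num; exact hs)

lemma auxF_mellin_eq (G : ℝ → ℝ) (hG : ContDiff ℝ (⊤ : ℕ∞) G)
    (hdecay : ∀ p m : ℕ,
      (fun t : ℝ => t ^ p * iteratedDeriv m G t) =O[atTop] (fun _ : ℝ => (1 : ℝ)))
    {s : ℂ} (hs : 0 < s.re) :
    (∫ t in Ioi (0:ℝ), (t : ℂ) ^ (s - 1) * G t) = mellin (auxF G) s + (G 0 : ℂ) / s := by
  have hdec0 : ∀ p : ℕ, (fun t : ℝ => t ^ p * G t) =O[atTop] (fun _ : ℝ => (1:ℝ)) := by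
    intro p; simpa [iteratedDeriv_zero] using hdecay p 0
  have mcG : MellinConvergent (fun t : ℝ => ((G t : ℝ):ℂ)) s := by
    have := integrableOn_cpow_mul hG.continuous hdec0 hs
    simpa [MellinConvergent, smul_eq_mul] using this
  have hind := hasMellin_one_Ioc hs
  have heq : (fun t : ℝ => Set.indicator (Set.Ioc 0 1) (fun _ => (G 0 : ℂ)) t)
      = fun t : ℝ => (G 0 : ℂ) • Set.indicator (Set.Ioc (0:ℝ) 1) (fun _ => (1:ℂ)) t := by
    funext t
    by_cases ht : t ∈ Set.Ioc (0:ℝ) 1 <;> simp [Set.indicator, ht]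
  have mc_ind : MellinConvergent
      (fun t : ℝ => Set.indicator (Set.Ioc 0 1) (fun _ => (G 0 : ℂ)) t) s := by
    rw [heq]; exact hind.1.const_smul _
  have mellin_ind : mellin
      (fun t : ℝ => Set.indicator (Set.Ioc 0 1) (fun _ => (G 0 : ℂ)) t) s
      = (G 0 : ℂ) / s := by
    rw [heq, mellin_const_smul, hind.2, smul_eq_mul]
    ring
  have hsub := hasMellin_sub mcG mc_ind
  have h1 : mellin (auxF G) s
      = mellin (fun t : ℝ => ((G t : ℝ):ℂ)) s - (G 0 : ℂ) / s := by
    rw [← mellin_ind]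
    exact hsub.2
  have h2 : mellin (fun t : ℝ => ((G t : ℝ):ℂ)) s
      = ∫ t in Ioi (0:ℝ), (t : ℂ) ^ (s - 1) * G t := by
    simp [mellin, smul_eq_mul]
  rw [h1, h2]
  ring

/-- Let `G : (0,∞) → ℝ` be smooth, regular at `t = 0`, with rapid
decay of `G` and its derivatives at infinity.  Let
`H(t) = t∂_t(t∂_t + 1)G(t) = t²G''(t) + 2tG'(t)` and let `ζ_H` be the analytic
continuation of `s ↦ (1/Γ(s)) ∫₀^∞ H(t) t^{s-1} dt`.  Then `ζ_H′(0) = -G(0)`,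
i.e. the regularized integral `∫_{→0}^∞ t∂_t(t∂_t+1)G(t) dt/t` equals `-G(0)`. -/
theorem regularized_integral_total_derivative
    (G : ℝ → ℝ) (hG : ContDiff ℝ (⊤ : ℕ∞) G)
    (hdecay : ∀ p m : ℕ,
      (fun t : ℝ => t ^ p * iteratedDeriv m G t) =O[atTop] (fun _ : ℝ => (1 : ℝ)))
    (ζH : ℂ → ℂ)
    (hentire : ∀ s : ℂ, DifferentiableAt ℂ ζH s)
    (hrepr : ∀ s : ℂ, 1 < s.re →
      ζH s = (Complex.Gamma s)⁻¹ *
        ∫ t in Set.Ioi (0 : ℝ),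
          ((t ^ 2 * deriv (deriv G) t + 2 * t * deriv G t : ℝ) : ℂ) * (t : ℂ) ^ (s - 1)) :
    deriv ζH 0 = -(G 0 : ℂ) := by
  set M : ℂ → ℂ := mellin (auxF G) with hM
  set g : ℂ → ℂ := fun z => (Complex.Gamma (z+1))⁻¹ * ((z-1) * (z * M z + (G 0:ℂ))) with hge
  set F : ℂ → ℂ := fun z => z * g z with hFe
  have hgdiff : ∀ z : ℂ, -1 < z.re → DifferentiableAt ℂ g z := by
    intro z hz
    have hMd : DifferentiableAt ℂ M z := auxF_differentiable G hG hdecay hz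
    have hΓ : DifferentiableAt ℂ (fun z : ℂ => (Complex.Gamma (z+1))⁻¹) z :=
      DifferentiableAt.comp (g := fun s : ℂ => (Complex.Gamma s)⁻¹) z
        Complex.differentiable_one_div_Gamma.differentiableAt
        ((differentiableAt_id (x := z)).add_const 1)
    exact hΓ.mul (((differentiableAt_id (x := z)).sub_const 1).mul
      (((differentiableAt_id (x := z)).mul hMd).add_const _))
  have hFdiff : ∀ z : ℂ, -1 < z.re → DifferentiableAt ℂ F z := by
    intro z hz
    exact (differentiableAt_id (x := z)).mul (hgdiff z hz)
  set U : Set ℂ := {z : ℂ | -1 < z.re} with hU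
  have hUopen : IsOpen U := isOpen_lt continuous_const Complex.continuous_re
  have h0U : (0:ℂ) ∈ U := by simp [hU]
  -- equality on re > 1
  have hkey : ∀ z : ℂ, 1 < z.re → ζH z = F z := by
    intro z hz
    have hz0 : z ≠ 0 := by
      intro h
      rw [h] at hz
      norm_num at hz
    have hΓadd : Complex.Gamma (z+1) = z * Complex.Gamma z := Complex.Gamma_add_one z hz0
    have hΓne : Complex.Gamma z ≠ 0 := by
      refine Complex.Gamma_ne_zero (fun m hm => ?_)
      have : z.re = (-(m:ℂ)).re := by rw [hm]
      simp at this
      have : (0:ℝ) ≤ m := Nat.cast_nonneg m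
      linarith
    rw [hrepr z hz, ibp_main G hG hdecay hz, auxF_mellin_eq G hG hdecay (by linarith)]
    simp only [hFe, hge]
    rw [hΓadd]
    have hzΓ : z * Complex.Gamma z ≠ 0 := mul_ne_zero hz0 hΓne
    field_simp
    ring
  -- identity principle
  have hEqOn : Set.EqOn ζH F U := by
    have hζana : AnalyticOnNhd ℂ ζH U := by
      have : DifferentiableOn ℂ ζH U := fun z _ => (hentire z).differentiableWithinAt
      exact this.analyticOnNhd hUopen
    have hFana : AnalyticOnNhd ℂ F U := by
      have : DifferentiableOn ℂ F U := fun z hz => (hFdiff z hz).differentiableWithinAt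
      exact this.analyticOnNhd hUopen
    have hpre : IsPreconnected U := (convex_halfSpace_re_gt (-1)).isPreconnected
    have h2U : (2:ℂ) ∈ U := by norm_num [hU]
    have hev2 : ζH =ᶠ[nhds (2:ℂ)] F := by
      have hVopen : IsOpen {z : ℂ | 1 < z.re} := isOpen_lt continuous_const Complex.continuous_re
      filter_upwards [hVopen.mem_nhds (by simp : (2:ℂ) ∈ {z : ℂ | 1 < z.re})] with z hz
      exact hkey z hz
    exact hζana.eqOn_of_preconnected_of_eventuallyEq hFana hpre h2U hev2
  have hev0 : ζH =ᶠ[nhds (0:ℂ)] F := hEqOn.eventuallyEq_of_mem (hUopen.mem_nhds h0U)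
  rw [hev0.deriv_eq]
  -- compute deriv F 0
  have hg0 : DifferentiableAt ℂ g 0 := hgdiff 0 (by norm_num)
  have hF' : HasDerivAt F (1 * g 0 + 0 * deriv g 0) 0 :=
    (hasDerivAt_id (0:ℂ)).mul hg0.hasDerivAt
  rw [hF'.deriv]
  simp [hge, Complex.Gamma_one]
end
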